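/- Define U : ℝ² → ℝ by U(x₁,x₂) = |x₁|⁴ if |x₁| ≤ |x₂|^{-1} (interpreting |x₂|^{-1} = ∞ when x₂ = 0) and U(x₁,x₂) = |x₂|^{-4} otherwise. Then U ≥ 0, and the set of symmetric 2×2 matrices A with ∫_{ℝ²} exp(-½xᵀAx - U(x)) dx < ∞ is exactly the set of positive definite matrices; in particular this domain is open. -/

import Mathlib

open MeasureTheory
open scoped ENNReal

noncomputable def quadForm2 (A : Matrix (Fin 2) (Fin 2) ℝ) (x : Fin 2 → ℝ) : ℝ :=
  ∑ i, ∑ j, A i j * x i * x j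

/-- The counterexample interaction of weak but not strong growth:
`U(x₁,x₂) = |x₁|⁴` if `|x₁| ≤ |x₂|⁻¹` (always when `x₂ = 0`), and `|x₂|⁻⁴` otherwise. -/
noncomputable def Ucex (x : Fin 2 → ℝ) : ℝ :=
  if |x 0| * |x 1| ≤ 1 then |x 0| ^ 4 else (|x 1| ^ 4)⁻¹

noncomputable def Zcex (A : Matrix (Fin 2) (Fin 2) ℝ) (U : (Fin 2 → ℝ) → ℝ) : ℝ≥0∞ :=
  ∫⁻ x : Fin 2 → ℝ, ENNReal.ofReal (Real.exp (-(1 / 2) * quadForm2 A x - U x))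

/-!
Integrate out `x 0` first. Completing the square, the `x 0`-integral of `exp (-xᵀAx/2)` at height
`x 1 = y` is `+∞` when `A 0 0 ≤ 0`, and equals `√(2π / A 0 0) · exp (-(det A / (2 A 0 0)) y²)` when
`A 0 0 > 0`. If `A` is positive definite, `U ≥ 0` bounds the partition function by a product of two
Gaussian integrals. Otherwise every slice contributes at least a fixed positive amount, and since
`U ≤ 1` on the half-plane `x 1 ≥ 1` (the only unbounded direction of `U` is the `x 0`-axis),
integrating over that half-plane gives `+∞`.
-/

open Real Set

lemma lintegral_ofReal_exp_neg_mul_sq {a : ℝ} (ha : 0 < a) :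
    ∫⁻ x : ℝ, ENNReal.ofReal (exp (-a * x ^ 2)) = ENNReal.ofReal √(π / a) := by
  rw [← integral_gaussian, ofReal_integral_eq_lintegral_ofReal (integrable_exp_neg_mul_sq ha)
    (Filter.Eventually.of_forall fun _ => (exp_pos _).le)]

lemma lintegral_ofReal_exp_neg_quadratic {a : ℝ} (ha : 0 < a) (b c : ℝ) :
    ∫⁻ x : ℝ, ENNReal.ofReal (exp (-a * x ^ 2 - b * x - c)) =
      ENNReal.ofReal √(π / a) * ENNReal.ofReal (exp (b ^ 2 / (4 * a) - c)) := by
  have hsq (x : ℝ) : -a * (x - b / (2 * a)) ^ 2 - b * (x - b / (2 * a)) - c =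
      -a * x ^ 2 + (b ^ 2 / (4 * a) - c) := by
    field_simp
    ring
  rw [← lintegral_sub_right_eq_self _ (b / (2 * a))]
  simp_rw [hsq, exp_add, ENNReal.ofReal_mul (exp_pos _).le]
  rw [lintegral_mul_const' _ _ ENNReal.ofReal_ne_top, lintegral_ofReal_exp_neg_mul_sq ha]

lemma lintegral_ofReal_exp_neg_quadratic_of_nonpos {a : ℝ} (ha : a ≤ 0) (b c : ℝ) :
    ∫⁻ x : ℝ, ENNReal.ofReal (exp (-a * x ^ 2 - b * x - c)) = ∞ := by
  obtain ⟨S, hSm, hS, hbS⟩ : ∃ S : Set ℝ, MeasurableSet S ∧ volume S = ∞ ∧ ∀ x ∈ S, b * x ≤ 0 := by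
    rcases le_total 0 b with hb | hb
    · exact ⟨Iic 0, measurableSet_Iic, volume_Iic, fun x hx => mul_nonpos_of_nonneg_of_nonpos hb hx⟩
    · exact ⟨Ici 0, measurableSet_Ici, volume_Ici, fun x hx => mul_nonpos_of_nonpos_of_nonneg hb hx⟩
  refine top_unique ?_
  calc ∞ = ∫⁻ _ in S, ENNReal.ofReal (exp (-c)) := by
        rw [setLIntegral_const, hS, ENNReal.mul_top (by simp [exp_pos])]
    _ ≤ ∫⁻ x in S, ENNReal.ofReal (exp (-a * x ^ 2 - b * x - c)) :=
        setLIntegral_mono' hSm fun x hx => ENNReal.ofReal_le_ofReal <| exp_le_exp.mpr <| by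
          nlinarith [hbS x hx, sq_nonneg x]
    _ ≤ _ := setLIntegral_le_lintegral _ _

lemma lintegral_fin_two {f : (Fin 2 → ℝ) → ℝ≥0∞} (hf : Measurable f) :
    ∫⁻ x, f x = ∫⁻ y, ∫⁻ x, f ![x, y] := by
  have he := (volume_preserving_finTwoArrow ℝ).symm
  rw [← he.lintegral_comp_emb MeasurableEquiv.finTwoArrow.symm.measurableEmbedding,
    Measure.volume_eq_prod]
  -- `MeasurableEquiv.finTwoArrow.symm (x, y)` is `![x, y]` definitionally.
  exact lintegral_prod_symm' _ (hf.comp MeasurableEquiv.finTwoArrow.symm.measurable)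

namespace Matrix

lemma posDef_iff_of_isSymm {A : Matrix (Fin 2) (Fin 2) ℝ} (hA : A.IsSymm) :
    A.PosDef ↔ 0 < A 0 0 ∧ 0 < A.det := by
  refine ⟨fun h => ⟨h.diag_pos, h.det_pos⟩, fun ⟨ha, hdet⟩ => ?_⟩
  rw [posDef_iff_dotProduct_mulVec]
  refine ⟨isHermitian_iff_isSymm.mpr hA, fun x hx => ?_⟩
  have hsymm : A 1 0 = A 0 1 := hA.apply 0 1
  rw [det_fin_two, hsymm] at hdet
  have hquad : A 0 0 * (star x ⬝ᵥ A *ᵥ x) =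
      (A 0 0 * x 0 + A 0 1 * x 1) ^ 2 + (A 0 0 * A 1 1 - A 0 1 * A 0 1) * x 1 ^ 2 := by
    simp only [dotProduct, Pi.star_apply, star_trivial, mulVec, Fin.sum_univ_two, hsymm]
    ring
  refine pos_of_mul_pos_right (hquad ▸ ?_) ha.le
  rcases eq_or_ne (x 1) 0 with h1 | h1
  · have h0 : x 0 ≠ 0 := fun h0 => hx (funext fun i => by fin_cases i <;> assumption)
    simp only [h1, mul_zero, add_zero, ne_eq, OfNat.ofNat_ne_zero, not_false_eq_true, zero_pow]
    positivity
  · positivity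

end Matrix

section

variable {A : Matrix (Fin 2) (Fin 2) ℝ}

lemma neg_half_mul_quadForm2_vec (hA : A.IsSymm) (x y : ℝ) :
    -(1 / 2) * quadForm2 A ![x, y] = -(A 0 0 / 2) * x ^ 2 - A 0 1 * y * x - A 1 1 * y ^ 2 / 2 := by
  simp only [quadForm2, Fin.sum_univ_two, Matrix.cons_val_zero, Matrix.cons_val_one,
    Matrix.cons_val_fin_one, hA.apply 0 1]
  ring

lemma lintegral_exp_quadForm2_slice_of_pos (hA : A.IsSymm) (ha : 0 < A 0 0) (y : ℝ) :
    ∫⁻ x, ENNReal.ofReal (exp (-(1 / 2) * quadForm2 A ![x, y])) =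
      ENNReal.ofReal √(π / (A 0 0 / 2)) *
        ENNReal.ofReal (exp (-(A.det / (2 * A 0 0)) * y ^ 2)) := by
  simp_rw [neg_half_mul_quadForm2_vec hA, lintegral_ofReal_exp_neg_quadratic (half_pos ha)]
  congr 3
  rw [Matrix.det_fin_two, hA.apply 0 1]
  field_simp
  ring

lemma lintegral_exp_quadForm2_slice_of_nonpos (hA : A.IsSymm) (ha : A 0 0 ≤ 0) (y : ℝ) :
    ∫⁻ x, ENNReal.ofReal (exp (-(1 / 2) * quadForm2 A ![x, y])) = ∞ := by
  simp_rw [neg_half_mul_quadForm2_vec hA]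
  exact lintegral_ofReal_exp_neg_quadratic_of_nonpos (by linarith) _ _

@[fun_prop]
lemma measurable_quadForm2 : Measurable (quadForm2 A) := by
  unfold quadForm2
  fun_prop

lemma zcex_ne_top_of_posDef (hA : A.PosDef) {U : (Fin 2 → ℝ) → ℝ} (hU : ∀ x, 0 ≤ U x) :
    Zcex A U ≠ ∞ := by
  have hsymm := Matrix.isHermitian_iff_isSymm.mp hA.isHermitian
  have ha := hA.diag_pos (i := 0)
  have hle : Zcex A U ≤ ∫⁻ x, ENNReal.ofReal (exp (-(1 / 2) * quadForm2 A x)) :=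
    lintegral_mono fun x => ENNReal.ofReal_le_ofReal <| exp_le_exp.mpr <| by linarith [hU x]
  refine ne_top_of_le_ne_top ?_ hle
  rw [lintegral_fin_two (by fun_prop)]
  simp_rw [lintegral_exp_quadForm2_slice_of_pos hsymm ha]
  rw [lintegral_const_mul' _ _ ENNReal.ofReal_ne_top,
    lintegral_ofReal_exp_neg_mul_sq (div_pos hA.det_pos (by positivity))]
  exact ENNReal.mul_ne_top ENNReal.ofReal_ne_top ENNReal.ofReal_ne_top

lemma Ucex_nonneg (x : Fin 2 → ℝ) : 0 ≤ Ucex x := by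
  unfold Ucex
  split_ifs <;> positivity

lemma Ucex_le_one {x : Fin 2 → ℝ} (hx : 1 ≤ |x 1|) : Ucex x ≤ 1 := by
  unfold Ucex
  split_ifs with h
  · have h0 : |x 0| ≤ 1 := by nlinarith [abs_nonneg (x 0)]
    exact pow_le_one₀ (abs_nonneg _) h0
  · exact inv_le_one_of_one_le₀ (one_le_pow₀ hx)

lemma zcex_eq_top_of_le_lintegral_slice {U : (Fin 2 → ℝ) → ℝ} {M : ℝ}
    (hU : ∀ x, 1 ≤ x 1 → U x ≤ M) {K : ℝ≥0∞} (hK : K ≠ 0)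
    (hslice : ∀ y, 1 ≤ y → K ≤ ∫⁻ x, ENNReal.ofReal (exp (-(1 / 2) * quadForm2 A ![x, y]))) :
    Zcex A U = ∞ := by
  set c := ENNReal.ofReal (exp (-M))
  set g : (Fin 2 → ℝ) → ℝ≥0∞ := fun x => ENNReal.ofReal (exp (-(1 / 2) * quadForm2 A x))
  have hlower : ∫⁻ x, {x | 1 ≤ x 1}.indicator (fun x => c * g x) x ≤ Zcex A U := by
    refine lintegral_mono fun x => ?_
    by_cases hx : 1 ≤ x 1
    · rw [indicator_of_mem (show x ∈ {x | 1 ≤ x 1} from hx),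
        ← ENNReal.ofReal_mul (exp_pos _).le, ← exp_add]
      exact ENNReal.ofReal_le_ofReal <| exp_le_exp.mpr <| by linarith [hU x hx]
    · rw [indicator_of_notMem (show x ∉ {x | 1 ≤ x 1} from hx)]
      exact zero_le
  refine top_unique (le_trans ?_ hlower)
  rw [lintegral_fin_two ((by fun_prop : Measurable fun x => c * g x).indicator
    (measurableSet_le measurable_const (measurable_pi_apply 1)))]
  calc ∞ = ∫⁻ y : ℝ, (Ici 1).indicator (fun _ => c * K) y := by
        rw [lintegral_indicator_const measurableSet_Ici, Real.volume_Ici,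
          ENNReal.mul_top (mul_ne_zero (by simp [c, exp_pos]) hK)]
    _ ≤ ∫⁻ y, ∫⁻ x, {x | 1 ≤ x 1}.indicator (fun x => c * g x) ![x, y] := by
        refine lintegral_mono fun y => ?_
        by_cases hy : 1 ≤ y
        · simp only [indicator_apply, mem_ofPred_eq, mem_Ici, Matrix.cons_val_one,
            Matrix.cons_val_zero, hy, if_true]
          rw [lintegral_const_mul _ (by fun_prop)]
          gcongr
          exact hslice y hy
        · simp [hy]

lemma zcex_eq_top_of_not_posDef (hA : A.IsSymm) (hpd : ¬A.PosDef) {U : (Fin 2 → ℝ) → ℝ} {M : ℝ}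
    (hU : ∀ x, 1 ≤ x 1 → U x ≤ M) : Zcex A U = ∞ := by
  rcases le_or_gt (A 0 0) 0 with ha | ha
  · refine zcex_eq_top_of_le_lintegral_slice hU one_ne_zero fun y _ => ?_
    rw [lintegral_exp_quadForm2_slice_of_nonpos hA ha]
    exact le_top
  · have hdet : A.det ≤ 0 := by
      by_contra! hdet
      exact hpd ((Matrix.posDef_iff_of_isSymm hA).mpr ⟨ha, hdet⟩)
    have hK : ENNReal.ofReal √(π / (A 0 0 / 2)) ≠ 0 :=
      (ENNReal.ofReal_pos.mpr (sqrt_pos.mpr (by positivity))).ne'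
    refine zcex_eq_top_of_le_lintegral_slice hU hK fun y _ => ?_
    rw [lintegral_exp_quadForm2_slice_of_pos hA ha]
    refine le_mul_of_one_le_right' ?_
    rw [← ENNReal.ofReal_one]
    refine ENNReal.ofReal_le_ofReal (one_le_exp ?_)
    have : A.det / (2 * A 0 0) ≤ 0 := div_nonpos_of_nonpos_of_nonneg hdet (by positivity)
    nlinarith [sq_nonneg y]

lemma isOpen_setOf_posDef_of_isSymm :
    IsOpen {A : {B : Matrix (Fin 2) (Fin 2) ℝ // B.IsSymm} | A.1.PosDef} := by
  simp_rw [Matrix.posDef_iff_of_isSymm (Subtype.prop _), ofPred_and]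
  have hcont : Continuous fun A : {B : Matrix (Fin 2) (Fin 2) ℝ // B.IsSymm} => A.1 :=
    continuous_subtype_val
  exact (isOpen_lt continuous_const ((continuous_apply_apply 0 0).comp hcont)).inter
    (isOpen_lt continuous_const hcont.matrix_det)

end

/-- `Ucex ≥ 0`, its partition function domain among symmetric matrices is
exactly the positive definite cone, and this domain is open. -/
theorem cex_domain_eq_posDef :
    (∀ x, 0 ≤ Ucex x) ∧
    (∀ A : Matrix (Fin 2) (Fin 2) ℝ, A.IsSymm → (Zcex A Ucex ≠ ⊤ ↔ A.PosDef)) ∧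
    IsOpen {A : {B : Matrix (Fin 2) (Fin 2) ℝ // B.IsSymm} | Zcex A.1 Ucex ≠ ⊤} := by
  have hdom (A : Matrix (Fin 2) (Fin 2) ℝ) (hA : A.IsSymm) : Zcex A Ucex ≠ ⊤ ↔ A.PosDef := by
    refine ⟨fun hfin => ?_, fun hpd => zcex_ne_top_of_posDef hpd Ucex_nonneg⟩
    by_contra hpd
    exact hfin (zcex_eq_top_of_not_posDef hA hpd fun x hx => Ucex_le_one (hx.trans (le_abs_self _)))
  refine ⟨Ucex_nonneg, hdom, ?_⟩
  simp_rw [hdom _ (Subtype.prop _)]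
  exact isOpen_setOf_posDef_of_isSymm
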